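/- arXiv:2512.23989 — 5 statements merged into one kernel-verified Lean document; each statement's English description precedes it below -/
import Mathlib

section
/- Let G = (V,E) be a finite simple graph and let D be a secure dominating set of G. Then for every vertex v ∈ D, the set epn(v,D) induces a complete subgraph of G (every two distinct vertices of epn(v,D) are adjacent). -/
/-- `D` is a dominating set of `G`: every vertex outside `D` has a neighbour in `D`. -/
def Dominates {V : Type*} (G : SimpleGraph V) (D : Set V) : Prop :=
  ∀ u, u ∉ D → ∃ v ∈ D, G.Adj u v

/-- `S` is a secure dominating set of `G`. -/
def SecureDominates {V : Type*} (G : SimpleGraph V) (S : Set V) : Prop :=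
  Dominates G S ∧
    ∀ u, u ∉ S → ∃ v ∈ S, G.Adj u v ∧ Dominates G ((S \ {v}) ∪ {u})

/-- The external private neighbourhood of `v` with respect to `D`:
vertices outside `D` whose only neighbour in `D` is `v`. -/
def epn {V : Type*} (G : SimpleGraph V) (v : V) (D : Set V) : Set V :=
  {u | u ∉ D ∧ G.Adj u v ∧ ∀ w ∈ D, G.Adj u w → w = v}

theorem epn_isClique_of_secureDominates {V : Type*} [Fintype V]
    (G : SimpleGraph V) (D : Set V) (hD : SecureDominates G D)
    (v : V) (hv : v ∈ D) :
    ∀ u₁ ∈ epn G v D, ∀ u₂ ∈ epn G v D, u₁ ≠ u₂ → G.Adj u₁ u₂ := by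
  rintro u₁ ⟨h₁D, h₁v, h₁priv⟩ u₂ ⟨h₂D, h₂v, h₂priv⟩ hne
  obtain ⟨w, hwD, hadj, hdom⟩ := hD.2 u₁ h₁D
  have hwv : w = v := h₁priv w hwD hadj
  have h₂mem : u₂ ∉ (D \ {w}) ∪ {u₁} := by
    rintro (⟨h, -⟩ | h)
    · exact h₂D h
    · exact hne (h.symm)
  obtain ⟨z, hz, hzadj⟩ := hdom u₂ h₂mem
  rcases hz with ⟨hzD, hzv⟩ | hz
  · exact absurd ((h₂priv z hzD hzadj).trans hwv.symm) hzv
  · simp only [Set.mem_singleton_iff] at hz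
    subst hz
    exact hzadj.symm
end

section
/- For the complete bipartite graph K_{p,q} with 1 ≤ p ≤ q, the secure domination number equals q if p = 1, equals 2 if p = 2, equals 3 if p = 3, and equals 4 if p ≥ 4. -/
/-- The secure domination number: the minimum cardinality of a secure dominating set. -/
noncomputable def secureDominationNumber {V : Type*} (G : SimpleGraph V) : ℕ :=
  sInf {k | ∃ S : Set V, SecureDominates G S ∧ S.ncard = k}

open Set Sum

namespace SecDomAux

variable {p q : ℕ}

lemma exists_notMem {n : ℕ} {T : Set (Fin n)} (h : T.ncard < n) : ∃ a, a ∉ T := by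
  by_contra hc
  push_neg at hc
  have hT : T = univ := eq_univ_of_forall hc
  rw [hT, ncard_univ, Nat.card_eq_fintype_card, Fintype.card_fin] at h
  omega

lemma adj_inl {a : Fin p} {v : Fin p ⊕ Fin q}
    (h : (completeBipartiteGraph (Fin p) (Fin q)).Adj (inl a) v) : ∃ b, v = inr b := by
  cases v with
  | inl a' => simp at h
  | inr b => exact ⟨b, rfl⟩

lemma adj_inr {b : Fin q} {v : Fin p ⊕ Fin q}
    (h : (completeBipartiteGraph (Fin p) (Fin q)).Adj (inr b) v) : ∃ a, v = inl a := by
  cases v with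
  | inl a => exact ⟨a, rfl⟩
  | inr b' => simp at h

lemma decomp (S : Set (Fin p ⊕ Fin q)) :
    S.ncard = {a : Fin p | inl a ∈ S}.ncard + {b : Fin q | inr b ∈ S}.ncard := by
  have hS : S = Sum.inl '' {a : Fin p | inl a ∈ S} ∪ Sum.inr '' {b : Fin q | inr b ∈ S} := by
    ext x; cases x <;> simp
  have hdisj : Disjoint (Sum.inl '' {a : Fin p | inl a ∈ S})
      (Sum.inr '' {b : Fin q | inr b ∈ S}) := by
    rw [disjoint_left]
    rintro x ⟨a, _, rfl⟩ ⟨b, _, hb⟩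
    simp at hb
  conv_lhs => rw [hS]
  rw [ncard_union_eq hdisj, ncard_image_of_injective _ Sum.inl_injective,
    ncard_image_of_injective _ Sum.inr_injective]

/-- All-right set is secure dominating when `p = 1`. -/
lemma secure_range_inr (hp : p = 1) (hq : 1 ≤ q) :
    SecureDominates (completeBipartiteGraph (Fin p) (Fin q)) (range (inr : Fin q → _)) := by
  subst hp
  constructor
  · intro u hu
    cases u with
    | inl a => exact ⟨inr ⟨0, hq⟩, ⟨_, rfl⟩, by simp⟩
    | inr b => exact absurd ⟨b, rfl⟩ hu
  · intro u hu
    cases u with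
    | inr b => exact absurd ⟨b, rfl⟩ hu
    | inl a =>
      refine ⟨inr ⟨0, hq⟩, ⟨_, rfl⟩, by simp, ?_⟩
      intro w hw
      cases w with
      | inl a' =>
        exact absurd (Or.inr (by simp [Subsingleton.elim a' a])) hw
      | inr b' =>
        by_cases hb' : b' = ⟨0, hq⟩
        · exact ⟨inl a, Or.inr rfl, by simp⟩
        · exact absurd (Or.inl ⟨⟨b', rfl⟩, by simp [hb']⟩) hw

lemma ncard_range_inr : (range (inr : Fin q → Fin p ⊕ Fin q)).ncard = q := by
  rw [decomp]
  have h1 : {a : Fin p | inl a ∈ range (inr : Fin q → Fin p ⊕ Fin q)} = ∅ := by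
    ext a; simp
  have h2 : {b : Fin q | inr b ∈ range (inr : Fin q → Fin p ⊕ Fin q)} = univ := by
    ext b; simp
  rw [h1, h2, ncard_empty, ncard_univ, Nat.card_eq_fintype_card, Fintype.card_fin]
  omega

/-- All-left set is secure dominating when `2 ≤ p`. -/
lemma secure_range_inl (hp : 2 ≤ p) :
    SecureDominates (completeBipartiteGraph (Fin p) (Fin q)) (range (inl : Fin p → _)) := by
  have h0 : (0 : ℕ) < p := by omega
  constructor
  · intro u hu
    cases u with
    | inl a => exact absurd ⟨a, rfl⟩ hu
    | inr b => exact ⟨inl ⟨0, h0⟩, ⟨_, rfl⟩, by simp⟩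
  · intro u hu
    cases u with
    | inl a => exact absurd ⟨a, rfl⟩ hu
    | inr b =>
      refine ⟨inl ⟨0, h0⟩, ⟨_, rfl⟩, by simp, ?_⟩
      intro w hw
      cases w with
      | inl a' =>
        by_cases ha' : a' = ⟨0, h0⟩
        · exact ⟨inr b, Or.inr rfl, by simp⟩
        · exact absurd (Or.inl ⟨⟨a', rfl⟩, by simp [ha']⟩) hw
      | inr b' =>
        by_cases hb' : b' = b
        · exact absurd (Or.inr (by simp [hb'])) hw
        · refine ⟨inl ⟨1, hp⟩, Or.inl ⟨⟨_, rfl⟩, by simp [Fin.ext_iff]⟩, by simp⟩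

lemma ncard_range_inl : (range (inl : Fin p → Fin p ⊕ Fin q)).ncard = p := by
  rw [decomp]
  have h1 : {a : Fin p | inl a ∈ range (inl : Fin p → Fin p ⊕ Fin q)} = univ := by
    ext a; simp
  have h2 : {b : Fin q | inr b ∈ range (inl : Fin p → Fin p ⊕ Fin q)} = ∅ := by
    ext b; simp
  rw [h1, h2, ncard_empty, ncard_univ, Nat.card_eq_fintype_card, Fintype.card_fin]
  omega

/-- The four-element set: two on each side, secure dominating when both sides have `≥ 2`. -/
lemma secure_four (hp : 2 ≤ p) (hq : 2 ≤ q) :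
    SecureDominates (completeBipartiteGraph (Fin p) (Fin q))
      {inl ⟨0, by omega⟩, inl ⟨1, hp⟩, inr ⟨0, by omega⟩, inr ⟨1, hq⟩} := by
  set a0 : Fin p := ⟨0, by omega⟩
  set a1 : Fin p := ⟨1, hp⟩
  set b0 : Fin q := ⟨0, by omega⟩
  set b1 : Fin q := ⟨1, hq⟩
  set S : Set (Fin p ⊕ Fin q) := {inl a0, inl a1, inr b0, inr b1} with hSdef
  constructor
  · intro u hu
    cases u with
    | inl a => exact ⟨inr b0, by simp [hSdef], by simp⟩
    | inr b => exact ⟨inl a0, by simp [hSdef], by simp⟩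
  · intro u hu
    cases u with
    | inl a =>
      refine ⟨inr b0, by simp [hSdef], by simp, ?_⟩
      intro w hw
      cases w with
      | inl a' =>
        refine ⟨inr b1, Or.inl ⟨by simp [hSdef], by simp [Fin.ext_iff]⟩, by simp⟩
      | inr b' =>
        refine ⟨inl a0, Or.inl ⟨by simp [hSdef], by simp⟩, by simp⟩
    | inr b =>
      refine ⟨inl a0, by simp [hSdef], by simp, ?_⟩
      intro w hw
      cases w with
      | inl a' =>
        refine ⟨inr b0, Or.inl ⟨by simp [hSdef], by simp⟩, by simp⟩
      | inr b' =>
        refine ⟨inl a1, Or.inl ⟨by simp [hSdef], by simp [Fin.ext_iff]⟩, by simp⟩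

lemma ncard_four (hp : 2 ≤ p) (hq : 2 ≤ q) :
    ({inl ⟨0, by omega⟩, inl ⟨1, hp⟩, inr ⟨0, by omega⟩, inr ⟨1, hq⟩} :
      Set (Fin p ⊕ Fin q)).ncard = 4 := by
  rw [ncard_insert_of_notMem (by simp [Fin.ext_iff]),
    ncard_insert_of_notMem (by simp [Fin.ext_iff]),
    ncard_pair (by simp [Fin.ext_iff])]

/-- Main lower bound: a secure dominating set with fewer than `min p q 4` elements
cannot exist. -/
lemma lower {S : Set (Fin p ⊕ Fin q)}
    (hS : SecureDominates (completeBipartiteGraph (Fin p) (Fin q)) S)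
    (h1 : S.ncard < p) (h2 : S.ncard < q) (h4 : S.ncard < 4) : False := by
  obtain ⟨hdom, hsec⟩ := hS
  set A := {a : Fin p | inl a ∈ S} with hAdef
  set B := {b : Fin q | inr b ∈ S} with hBdef
  have hd : S.ncard = A.ncard + B.ncard := decomp S
  by_cases hB : B.ncard = 0
  · have hBe : B = ∅ := by rwa [ncard_eq_zero] at hB
    obtain ⟨a, ha⟩ := exists_notMem (show A.ncard < p by omega)
    obtain ⟨v, hv, hadj⟩ := hdom (inl a) ha
    obtain ⟨b, rfl⟩ := adj_inl hadj
    have : b ∈ B := hv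
    rw [hBe] at this
    exact this
  by_cases hA : A.ncard = 0
  · have hAe : A = ∅ := by rwa [ncard_eq_zero] at hA
    obtain ⟨b, hb⟩ := exists_notMem (show B.ncard < q by omega)
    obtain ⟨v, hv, hadj⟩ := hdom (inr b) hb
    obtain ⟨a, rfl⟩ := adj_inr hadj
    have : a ∈ A := hv
    rw [hAe] at this
    exact this
  rcases (show B.ncard = 1 ∨ A.ncard = 1 by omega) with hB1 | hA1
  · -- exactly one right vertex in S
    obtain ⟨b0, hb0⟩ := ncard_eq_one.mp hB1
    obtain ⟨a', ha'⟩ := exists_notMem (show A.ncard < p by omega)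
    obtain ⟨v, hvS, hadj, hdom'⟩ := hsec (inl a') ha'
    obtain ⟨b, rfl⟩ := adj_inl hadj
    have hbB : b ∈ B := hvS
    rw [hb0] at hbB
    obtain rfl : b = b0 := hbB
    obtain ⟨a'', ha''⟩ := exists_notMem (show (insert a' A).ncard < p from
      lt_of_le_of_lt (ncard_insert_le _ _) (by omega))
    have hw : inl a'' ∉ (S \ {inr b}) ∪ {inl a'} := by
      rintro (⟨hmem, -⟩ | h)
      · exact ha'' (mem_insert_of_mem _ hmem)
      · rw [mem_singleton_iff, inl.injEq] at h
        exact ha'' (h ▸ mem_insert _ _)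
    obtain ⟨v', hv', hadj'⟩ := hdom' (inl a'') hw
    obtain ⟨b', rfl⟩ := adj_inl hadj'
    rcases hv' with ⟨hbS, hne⟩ | h
    · have : b' ∈ B := hbS
      rw [hb0, mem_singleton_iff] at this
      exact hne (by simp [this])
    · simp at h
  · -- exactly one left vertex in S
    obtain ⟨a0, ha0⟩ := ncard_eq_one.mp hA1
    obtain ⟨b', hb'⟩ := exists_notMem (show B.ncard < q by omega)
    obtain ⟨v, hvS, hadj, hdom'⟩ := hsec (inr b') hb'
    obtain ⟨a, rfl⟩ := adj_inr hadj
    have haA : a ∈ A := hvS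
    rw [ha0] at haA
    obtain rfl : a = a0 := haA
    obtain ⟨b'', hb''⟩ := exists_notMem (show (insert b' B).ncard < q from
      lt_of_le_of_lt (ncard_insert_le _ _) (by omega))
    have hw : inr b'' ∉ (S \ {inl a}) ∪ {inr b'} := by
      rintro (⟨hmem, -⟩ | h)
      · exact hb'' (mem_insert_of_mem _ hmem)
      · rw [mem_singleton_iff, inr.injEq] at h
        exact hb'' (h ▸ mem_insert _ _)
    obtain ⟨v', hv', hadj'⟩ := hdom' (inr b'') hw
    obtain ⟨a', rfl⟩ := adj_inr hadj'
    rcases hv' with ⟨haS, hne⟩ | h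
    · have : a' ∈ A := haS
      rw [ha0, mem_singleton_iff] at this
      exact hne (by simp [this])
    · simp at h

/-- Lower bound for the star case `p = 1`. -/
lemma lower_one (hq : 1 ≤ q) {S : Set (Fin 1 ⊕ Fin q)}
    (hS : SecureDominates (completeBipartiteGraph (Fin 1) (Fin q)) S) : q ≤ S.ncard := by
  obtain ⟨hdom, hsec⟩ := hS
  set A := {a : Fin 1 | inl a ∈ S} with hAdef
  set B := {b : Fin q | inr b ∈ S} with hBdef
  have hd : S.ncard = A.ncard + B.ncard := decomp S
  have hcompl : B.ncard + Bᶜ.ncard = q := by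
    rw [ncard_add_ncard_compl, Nat.card_eq_fintype_card, Fintype.card_fin]
  have hBc : Bᶜ.ncard ≤ 1 := by
    by_contra hc
    push_neg at hc
    obtain ⟨b1, hb1, b2, hb2, hne⟩ := (one_lt_ncard (toFinite _)).mp hc
    obtain ⟨v, hvS, hadj, hdom'⟩ := hsec (inr b1) hb1
    obtain ⟨a0, rfl⟩ := adj_inr hadj
    have hw : inr b2 ∉ (S \ {inl a0}) ∪ {inr b1} := by
      rintro (⟨hmem, -⟩ | h)
      · exact hb2 hmem
      · rw [mem_singleton_iff, inr.injEq] at h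
        exact hne h.symm
    obtain ⟨v', hv', hadj'⟩ := hdom' (inr b2) hw
    obtain ⟨a', rfl⟩ := adj_inr hadj'
    rcases hv' with ⟨-, hne'⟩ | h
    · exact hne' (by simp [Subsingleton.elim a' a0])
    · simp at h
  rcases Nat.eq_zero_or_pos (Bᶜ.ncard) with h0 | hpos
  · omega
  · -- there is exactly one b outside B; the centre must be in S
    have hBcne : Bᶜ.Nonempty := by
      rw [← ncard_pos (toFinite _)] at *; omega
    obtain ⟨b, hb⟩ := hBcne
    obtain ⟨v, hv, hadj⟩ := hdom (inr b) hb
    obtain ⟨a, rfl⟩ := adj_inr hadj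
    have hApos : 0 < A.ncard := (ncard_pos (toFinite _)).mpr ⟨a, hv⟩
    omega

end SecDomAux

open SecDomAux in
theorem secureDominationNumber_completeBipartite (p q : ℕ) (hp : 1 ≤ p) (hpq : p ≤ q) :
    (p = 1 → secureDominationNumber (completeBipartiteGraph (Fin p) (Fin q)) = q) ∧
    (p = 2 → secureDominationNumber (completeBipartiteGraph (Fin p) (Fin q)) = 2) ∧
    (p = 3 → secureDominationNumber (completeBipartiteGraph (Fin p) (Fin q)) = 3) ∧
    (4 ≤ p → secureDominationNumber (completeBipartiteGraph (Fin p) (Fin q)) = 4) := by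
  have hq : 1 ≤ q := le_trans hp hpq
  refine ⟨?_, ?_, ?_, ?_⟩
  · intro h1
    have hmem : q ∈ {k | ∃ S : Set (Fin p ⊕ Fin q),
        SecureDominates (completeBipartiteGraph (Fin p) (Fin q)) S ∧ S.ncard = k} :=
      ⟨range inr, secure_range_inr h1 hq, ncard_range_inr⟩
    refine le_antisymm (Nat.sInf_le hmem) (le_csInf ⟨q, hmem⟩ ?_)
    rintro k ⟨S, hS, rfl⟩
    subst h1
    exact lower_one hq hS
  · intro h2
    have hmem : 2 ∈ {k | ∃ S : Set (Fin p ⊕ Fin q),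
        SecureDominates (completeBipartiteGraph (Fin p) (Fin q)) S ∧ S.ncard = k} :=
      ⟨range inl, secure_range_inl (by omega), by rw [ncard_range_inl, h2]⟩
    refine le_antisymm (Nat.sInf_le hmem) (le_csInf ⟨2, hmem⟩ ?_)
    rintro k ⟨S, hS, rfl⟩
    by_contra hc
    push_neg at hc
    exact lower hS (by omega) (by omega) (by omega)
  · intro h3
    have hmem : 3 ∈ {k | ∃ S : Set (Fin p ⊕ Fin q),
        SecureDominates (completeBipartiteGraph (Fin p) (Fin q)) S ∧ S.ncard = k} :=
      ⟨range inl, secure_range_inl (by omega), by rw [ncard_range_inl, h3]⟩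
    refine le_antisymm (Nat.sInf_le hmem) (le_csInf ⟨3, hmem⟩ ?_)
    rintro k ⟨S, hS, rfl⟩
    by_contra hc
    push_neg at hc
    exact lower hS (by omega) (by omega) (by omega)
  · intro h4
    have hp2 : 2 ≤ p := by omega
    have hq2 : 2 ≤ q := by omega
    have hmem : 4 ∈ {k | ∃ S : Set (Fin p ⊕ Fin q),
        SecureDominates (completeBipartiteGraph (Fin p) (Fin q)) S ∧ S.ncard = k} :=
      ⟨_, secure_four hp2 hq2, ncard_four hp2 hq2⟩
    refine le_antisymm (Nat.sInf_le hmem) (le_csInf ⟨4, hmem⟩ ?_)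
    rintro k ⟨S, hS, rfl⟩
    by_contra hc
    push_neg at hc
    exact lower hS (by omega) (by omega) (by omega)
end

section
/- Let G be a split graph with clique K and independent set I, and let G* be the graph obtained from G by adding two new vertices x and y, where x is adjacent to y and to every vertex of G, and y is adjacent only to x. Then for every positive integer k: G has a dominating set of cardinality at most k if and only if G* has a secure dominating set of cardinality at most k+1. -/
/-- The graph `G*` obtained from `G` by adding two new vertices
`x = Sum.inr 0` and `y = Sum.inr 1`, where `x` is adjacent to `y` and to every
vertex of `G`, and `y` is adjacent only to `x`. -/
def splitExt {V : Type*} (G : SimpleGraph V) : SimpleGraph (V ⊕ Fin 2) :=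
  SimpleGraph.fromRel (fun a b =>
    (∃ u v, a = Sum.inl u ∧ b = Sum.inl v ∧ G.Adj u v) ∨ b = Sum.inr 0)

section aux
variable {V : Type*} {G : SimpleGraph V}

lemma adj_inl {u v : V} : (splitExt G).Adj (Sum.inl u) (Sum.inl v) ↔ G.Adj u v := by
  simp only [splitExt, SimpleGraph.fromRel_adj]
  constructor
  · rintro ⟨hne, (⟨a,b,ha,hb,hab⟩|h)|(⟨a,b,ha,hb,hab⟩|h)⟩
    · cases ha; cases hb; exact hab
    · simp at h
    · cases ha; cases hb; exact hab.symm
    · simp at h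
  · intro h
    exact ⟨by simp [h.ne], Or.inl (Or.inl ⟨u, v, rfl, rfl, h⟩)⟩

lemma adj_x {a : V ⊕ Fin 2} (h : a ≠ Sum.inr 0) : (splitExt G).Adj a (Sum.inr 0) :=
  ⟨h, Or.inl (Or.inr rfl)⟩

lemma not_adj_y {u : V} : ¬ (splitExt G).Adj (Sum.inl u) (Sum.inr 1) := by
  rintro ⟨hne, (⟨a,b,ha,hb,hab⟩|h)|(⟨a,b,ha,hb,hab⟩|h)⟩ <;> simp_all

lemma adj_y_iff {a : V ⊕ Fin 2} : (splitExt G).Adj (Sum.inr 1) a ↔ a = Sum.inr 0 := by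
  constructor
  · rintro ⟨hne, (⟨u,v,ha,hb,hab⟩|h)|(⟨u,v,ha,hb,hab⟩|h)⟩ <;> simp_all
  · rintro rfl; exact adj_x (by simp)

end aux

theorem splitExt_domination_iff_secureDomination {V : Type*} [Fintype V]
    (G : SimpleGraph V) (K I : Set V)
    (hpart : K ∪ I = Set.univ) (hdisj : Disjoint K I)
    (hK : G.IsClique K) (hI : ∀ a ∈ I, ∀ b ∈ I, ¬ G.Adj a b)
    (k : ℕ) (hk : 0 < k) :
    (∃ D : Set V, Dominates G D ∧ D.ncard ≤ k) ↔
      (∃ S : Set (V ⊕ Fin 2), SecureDominates (splitExt G) S ∧ S.ncard ≤ k + 1) := by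
  classical
  constructor
  · rintro ⟨D, hD, hDk⟩
    refine ⟨Sum.inl '' D ∪ {Sum.inr 0}, ⟨?_, ?_⟩, ?_⟩
    · -- dominating
      intro u hu
      refine ⟨Sum.inr 0, by simp, adj_x ?_⟩
      intro h; exact hu (by simp [h])
    · -- secure
      intro u hu
      match u with
      | Sum.inl w =>
        have hw : w ∉ D := fun h => hu (Or.inl ⟨w, h, rfl⟩)
        obtain ⟨v, hv, hadj⟩ := hD w hw
        refine ⟨Sum.inl v, Or.inl ⟨v, hv, rfl⟩, adj_inl.mpr hadj, ?_⟩
        intro z hz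
        refine ⟨Sum.inr 0, Or.inl ⟨by simp, by simp⟩, adj_x ?_⟩
        intro h; subst h; exact hz (Or.inl ⟨by simp, by simp⟩)
      | Sum.inr 0 => exact absurd (Or.inr rfl) hu
      | Sum.inr 1 =>
        refine ⟨Sum.inr 0, Or.inr rfl, adj_x (by simp), ?_⟩
        intro z hz
        match z with
        | Sum.inl w =>
          have hw : w ∉ D := fun h => hz (Or.inl ⟨Or.inl ⟨w, h, rfl⟩, by simp⟩)
          obtain ⟨v, hv, hadj⟩ := hD w hw
          exact ⟨Sum.inl v, Or.inl ⟨Or.inl ⟨v, hv, rfl⟩, by simp⟩, adj_inl.mpr hadj⟩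
        | Sum.inr 0 =>
          exact ⟨Sum.inr 1, Or.inr rfl, ((adj_y_iff (G := G)).mpr rfl).symm⟩
        | Sum.inr 1 => exact absurd (Or.inr rfl) hz
    · -- cardinality
      calc (Sum.inl '' D ∪ {Sum.inr 0} : Set (V ⊕ Fin 2)).ncard
          ≤ (Sum.inl '' D).ncard + ({Sum.inr 0} : Set (V ⊕ Fin 2)).ncard :=
            Set.ncard_union_le _ _
        _ ≤ k + 1 := by
            rw [Set.ncard_image_of_injective _ Sum.inl_injective, Set.ncard_singleton]
            omega
  · rintro ⟨S, ⟨hdom, hsec⟩, hSk⟩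
    set S' : Set V := {w | Sum.inl w ∈ S} with hS'
    have hfin : S.Finite := Set.toFinite S
    have hfin' : S'.Finite := Set.toFinite S'
    have himg : Sum.inl '' S' ⊆ S := by rintro _ ⟨w, hw, rfl⟩; exact hw
    by_cases hx : Sum.inr 0 ∈ S
    · by_cases hy : Sum.inr 1 ∈ S
      · -- both in S
        have hcard : S'.ncard + 2 ≤ k + 1 := by
          have hsub : Sum.inl '' S' ∪ {Sum.inr 0, Sum.inr 1} ⊆ S := by
            rintro a (⟨w, hw, rfl⟩ | (rfl | rfl))
            · exact hw
            · exact hx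
            · exact hy
          have hdisj2 : Disjoint (Sum.inl '' S') ({Sum.inr 0, Sum.inr 1} : Set (V ⊕ Fin 2)) := by
            simp [Set.disjoint_left]
          have heq := Set.ncard_union_eq hdisj2 (Set.toFinite _) (Set.toFinite _)
          have h2 : ({Sum.inr 0, Sum.inr 1} : Set (V ⊕ Fin 2)).ncard = 2 :=
            Set.ncard_pair (by simp)
          have h3 : (Sum.inl '' S' : Set (V ⊕ Fin 2)).ncard = S'.ncard :=
            Set.ncard_image_of_injective _ Sum.inl_injective
          calc S'.ncard + 2
              = (Sum.inl '' S').ncard + ({Sum.inr 0, Sum.inr 1} : Set (V ⊕ Fin 2)).ncard := by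
                rw [h2, h3]
            _ = (Sum.inl '' S' ∪ {Sum.inr 0, Sum.inr 1}).ncard := heq.symm
            _ ≤ S.ncard := Set.ncard_le_ncard hsub hfin
            _ ≤ k + 1 := hSk
        by_cases hall : ∀ w, w ∉ S' → ∃ u ∈ S', G.Adj w u
        · exact ⟨S', hall, by omega⟩
        · push_neg at hall
          obtain ⟨w, hw, hnone⟩ := hall
          obtain ⟨v, hv, hadj, hT⟩ := hsec (Sum.inl w) hw
          have hvx : v = Sum.inr 0 := by
            match v with
            | Sum.inl u => exact absurd (adj_inl.mp hadj) (hnone u hv)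
            | Sum.inr 0 => rfl
            | Sum.inr 1 => exact absurd hadj not_adj_y
          subst hvx
          refine ⟨insert w S', ?_, ?_⟩
          · intro z hz
            have hzT : Sum.inl z ∉ (S \ {Sum.inr 0}) ∪ {Sum.inl w} := by
              rintro (⟨hzS, -⟩ | h)
              · exact hz (Or.inr hzS)
              · simp only [Set.mem_singleton_iff, Sum.inl.injEq] at h
                exact hz (Or.inl h)
            obtain ⟨t, htT, hadjt⟩ := hT (Sum.inl z) hzT
            match t with
            | Sum.inl u =>
              refine ⟨u, ?_, adj_inl.mp hadjt⟩
              rcases htT with ⟨huS, -⟩ | h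
              · exact Or.inr huS
              · simp only [Set.mem_singleton_iff, Sum.inl.injEq] at h
                exact Or.inl h
            | Sum.inr 0 =>
              exfalso
              rcases htT with ⟨-, h⟩ | h
              · exact h rfl
              · simp at h
            | Sum.inr 1 => exact absurd hadjt not_adj_y
          · calc (insert w S').ncard ≤ S'.ncard + 1 := Set.ncard_insert_le _ _
              _ ≤ k := by omega
      · -- x ∈ S, y ∉ S
        obtain ⟨v, hv, hadj, hT⟩ := hsec (Sum.inr 1) hy
        have hvx : v = Sum.inr 0 := adj_y_iff.mp hadj
        subst hvx
        refine ⟨S', ?_, ?_⟩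
        · intro z hz
          have hzT : Sum.inl z ∉ (S \ {Sum.inr 0}) ∪ {Sum.inr 1} := by
            rintro (⟨hzS, -⟩ | h)
            · exact hz hzS
            · simp at h
          obtain ⟨t, htT, hadjt⟩ := hT (Sum.inl z) hzT
          match t with
          | Sum.inl u =>
            refine ⟨u, ?_, adj_inl.mp hadjt⟩
            rcases htT with ⟨huS, -⟩ | h
            · exact huS
            · simp at h
          | Sum.inr 0 =>
            exfalso
            rcases htT with ⟨-, h⟩ | h
            · exact h rfl
            · simp at h
          | Sum.inr 1 => exact absurd hadjt not_adj_y
        · have hsub : Sum.inl '' S' ∪ {Sum.inr 0} ⊆ S := by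
            rintro a (⟨w, hw, rfl⟩ | rfl)
            · exact hw
            · exact hx
          have hdisj2 : Disjoint (Sum.inl '' S') ({Sum.inr 0} : Set (V ⊕ Fin 2)) := by
            simp [Set.disjoint_left]
          have := Set.ncard_union_eq hdisj2 (Set.toFinite _) (Set.toFinite _)
          have : S'.ncard + 1 ≤ k + 1 := by
            calc S'.ncard + 1 = (Sum.inl '' S' ∪ {Sum.inr 0}).ncard := by
                  rw [this, Set.ncard_singleton,
                    Set.ncard_image_of_injective _ Sum.inl_injective]
              _ ≤ S.ncard := Set.ncard_le_ncard hsub hfin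
              _ ≤ k + 1 := hSk
          omega
    · -- x ∉ S, hence y ∈ S
      have hy : Sum.inr 1 ∈ S := by
        by_contra hy
        obtain ⟨v, hv, hadj⟩ := hdom (Sum.inr 1) hy
        rw [adj_y_iff.mp hadj] at hv
        exact hx hv
      refine ⟨S', ?_, ?_⟩
      · intro z hz
        obtain ⟨t, htS, hadjt⟩ := hdom (Sum.inl z) hz
        match t with
        | Sum.inl u => exact ⟨u, htS, adj_inl.mp hadjt⟩
        | Sum.inr 0 => exact absurd htS hx
        | Sum.inr 1 => exact absurd hadjt not_adj_y
      · have hsub : Sum.inl '' S' ∪ {Sum.inr 1} ⊆ S := by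
          rintro a (⟨w, hw, rfl⟩ | rfl)
          · exact hw
          · exact hy
        have hdisj2 : Disjoint (Sum.inl '' S') ({Sum.inr 1} : Set (V ⊕ Fin 2)) := by
          simp [Set.disjoint_left]
        have := Set.ncard_union_eq hdisj2 (Set.toFinite _) (Set.toFinite _)
        have : S'.ncard + 1 ≤ k + 1 := by
          calc S'.ncard + 1 = (Sum.inl '' S' ∪ {Sum.inr 1}).ncard := by
                rw [this, Set.ncard_singleton,
                  Set.ncard_image_of_injective _ Sum.inl_injective]
            _ ≤ S.ncard := Set.ncard_le_ncard hsub hfin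
            _ ≤ k + 1 := hSk
        omega
end

section
/- Let G be a split graph with clique K and independent set I, and suppose there exists a star T on vertex set I (a tree in which one vertex is adjacent to all others) such that for every v ∈ K, the set N_G(v) ∩ I induces a connected subgraph of T. Let G* be the graph obtained from G by adding two new vertices x and y, where x is adjacent to y and to every vertex of G, and y is adjacent only to x. Then there exists a star T' on vertex set I ∪ {y} such that for every v ∈ K ∪ {x}, the set N_{G*}(v) ∩ (I ∪ {y}) induces a connected subgraph of T'. -/
/-!
A subset of a star induces a connected subgraph iff it is nonempty and either contains the centre
or is a single vertex. Keep the centre `c` of `T` as the centre of `T'`. For `v ∈ K` the new vertex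
`y` is not a neighbour, so `N_{G*}(v) ∩ (I ∪ {y})` is a copy of `N_G(v) ∩ I` and the criterion
transfers; `x` is adjacent to `c` itself.
-/

namespace SimpleGraph

variable {W W' : Type*}

lemma starGraph_adj_iff_eq_center {c a b : W} :
    (starGraph c).Adj a b ↔ (a = c ∧ b ≠ c) ∨ (b = c ∧ a ≠ c) := by
  rw [starGraph_adj]
  grind

lemma connected_induce_starGraph_iff (c : W) (S : Set W) :
    ((starGraph c).induce S).Connected ↔ S.Nonempty ∧ (c ∈ S ∨ S.Subsingleton) := by
  constructor
  · intro h
    refine ⟨Set.nonempty_coe_sort.mp h.nonempty, or_iff_not_imp_left.mpr fun hc => ?_⟩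
    -- every edge of a star meets its centre, so without the centre no edges are left
    have hbot : (starGraph c).induce S = ⊥ := by
      ext a b
      simp only [comap_adj, Function.Embedding.subtype_apply, starGraph_adj, bot_adj, iff_false]
      rintro ⟨-, ha | hb⟩
      exacts [hc (ha ▸ a.2), hc (hb ▸ b.2)]
    have := preconnected_bot_iff_subsingleton.mp (hbot ▸ h.preconnected)
    exact Set.subsingleton_coe S |>.mp this
  · rintro ⟨hne, hc | hsub⟩
    · refine Connected.of_isUniversal (v := ⟨c, hc⟩) fun w hw => ?_
      simpa [starGraph_adj] using fun h => hw (Subtype.ext h)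
    · have : Nonempty S := hne.to_subtype
      have : Subsingleton S := hsub.coe_sort
      exact ⟨Preconnected.of_subsingleton⟩

lemma connected_induce_starGraph_image_iff {f : W → W'} (hf : f.Injective) (c : W) (S : Set W) :
    ((starGraph (f c)).induce (f '' S)).Connected ↔ ((starGraph c).induce S).Connected := by
  simp only [connected_induce_starGraph_iff, Set.image_nonempty, hf.mem_set_image,
    hf.subsingleton_image_iff]

end SimpleGraph

section splitExt

variable {V : Type*} (G : SimpleGraph V)

@[simp]
lemma splitExt_adj_inl_inl {u v : V} : (splitExt G).Adj (.inl u) (.inl v) ↔ G.Adj u v := by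
  simpa [splitExt, G.adj_comm v u] using G.ne_of_adj

@[simp]
lemma splitExt_adj_inl_inr {u : V} {i : Fin 2} : (splitExt G).Adj (.inl u) (.inr i) ↔ i = 0 := by
  simp [splitExt]

lemma splitExt_adj_inr_zero {w : V ⊕ Fin 2} : (splitExt G).Adj (.inr 0) w ↔ w ≠ .inr 0 := by
  simp [splitExt, eq_comm]

end splitExt

theorem splitExt_starConvex_on_independentSet_general {V : Type*}
    (G : SimpleGraph V) (K I : Set V)
    -- there is a star `T` on `I` such that for every `v ∈ K`,
    -- `N_G(v) ∩ I` induces a connected subgraph of `T`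
    (T : SimpleGraph ↥I) (c : ↥I)
    (hstar : ∀ a b, T.Adj a b ↔ (a = c ∧ b ≠ c) ∨ (b = c ∧ a ≠ c))
    (hconv : ∀ v ∈ K, (SimpleGraph.induce {w : ↥I | G.Adj v ↑w} T).Connected) :
    -- then there is a star `T'` on `I ∪ {y}` such that for every `v ∈ K ∪ {x}`,
    -- `N_{G*}(v) ∩ (I ∪ {y})` induces a connected subgraph of `T'`
    ∃ T' : SimpleGraph ↥(Sum.inl '' I ∪ {Sum.inr 1} : Set (V ⊕ Fin 2)),
      ∃ c' : ↥(Sum.inl '' I ∪ {Sum.inr 1} : Set (V ⊕ Fin 2)),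
        (∀ a b, T'.Adj a b ↔ (a = c' ∧ b ≠ c') ∨ (b = c' ∧ a ≠ c')) ∧
        ∀ v ∈ (Sum.inl '' K ∪ {Sum.inr 0} : Set (V ⊕ Fin 2)),
          (SimpleGraph.induce
            {w : ↥(Sum.inl '' I ∪ {Sum.inr 1} : Set (V ⊕ Fin 2)) | (splitExt G).Adj v ↑w}
            T').Connected := by
  have hT : T = SimpleGraph.starGraph c := by
    ext a b
    rw [hstar, SimpleGraph.starGraph_adj_iff_eq_center]
  let e : ↥I → ↥(Sum.inl '' I ∪ {Sum.inr 1} : Set (V ⊕ Fin 2)) :=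
    fun w => ⟨.inl w, .inl (Set.mem_image_of_mem _ w.2)⟩
  have he : e.Injective := fun a b h => Subtype.ext (Sum.inl_injective (congrArg Subtype.val h))
  refine ⟨SimpleGraph.starGraph (e c), e c, fun a b => SimpleGraph.starGraph_adj_iff_eq_center, ?_⟩
  rintro v (⟨k, hk, rfl⟩ | rfl)
  · have hnbr : {w : ↥(Sum.inl '' I ∪ {Sum.inr 1} : Set (V ⊕ Fin 2)) |
        (splitExt G).Adj (.inl k) ↑w} = e '' {w : ↥I | G.Adj k w} := by
      ext ⟨w, ⟨u, hu, rfl⟩ | rfl⟩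
      · simp [e, Subtype.ext_iff, hu]
      · simp [e, Subtype.ext_iff]
    rw [hnbr, SimpleGraph.connected_induce_starGraph_image_iff he, ← hT]
    exact hconv k hk
  · refine (SimpleGraph.connected_induce_starGraph_iff _ _).mpr ⟨⟨e c, ?_⟩, .inl ?_⟩ <;>
      simp [splitExt_adj_inr_zero, e]

theorem splitExt_starConvex_on_independentSet {V : Type*} [Fintype V]
    (G : SimpleGraph V) (K I : Set V)
    (hpart : K ∪ I = Set.univ) (hdisj : Disjoint K I)
    (hK : G.IsClique K) (hI : ∀ a ∈ I, ∀ b ∈ I, ¬ G.Adj a b)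
    -- there is a star `T` on `I` such that for every `v ∈ K`,
    -- `N_G(v) ∩ I` induces a connected subgraph of `T`
    (T : SimpleGraph ↥I) (c : ↥I)
    (hstar : ∀ a b, T.Adj a b ↔ (a = c ∧ b ≠ c) ∨ (b = c ∧ a ≠ c))
    (hconv : ∀ v ∈ K, (SimpleGraph.induce {w : ↥I | G.Adj v ↑w} T).Connected) :
    -- then there is a star `T'` on `I ∪ {y}` such that for every `v ∈ K ∪ {x}`,
    -- `N_{G*}(v) ∩ (I ∪ {y})` induces a connected subgraph of `T'`
    ∃ T' : SimpleGraph ↥(Sum.inl '' I ∪ {Sum.inr 1} : Set (V ⊕ Fin 2)),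
      ∃ c' : ↥(Sum.inl '' I ∪ {Sum.inr 1} : Set (V ⊕ Fin 2)),
        (∀ a b, T'.Adj a b ↔ (a = c' ∧ b ≠ c') ∨ (b = c' ∧ a ≠ c')) ∧
        ∀ v ∈ (Sum.inl '' K ∪ {Sum.inr 0} : Set (V ⊕ Fin 2)),
          (SimpleGraph.induce
            {w : ↥(Sum.inl '' I ∪ {Sum.inr 1} : Set (V ⊕ Fin 2)) | (splitExt G).Adj v ↑w}
            T').Connected :=
  splitExt_starConvex_on_independentSet_general G K I T c hstar hconv
end

section
/- Let G be a bisplit graph with partition (X,Y,Z), where X, Y, Z are independent sets and Y ∪ Z induces a complete bipartite graph. Let G* be obtained from G by adding four new vertices x, y, z, x' forming a path x–y–z–x', where additionally y is adjacent to every vertex of X ∪ Z and z is adjacent to every vertex of Y. Then for every positive integer k: G has a dominating set of cardinality at most k if and only if G* has a secure dominating set of cardinality at most k+2. -/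
/-- The graph `G*` obtained from a bisplit graph `G` (with parts `X`, `Y`, `Z`) by adding four
new vertices `x = Sum.inr 0`, `y = Sum.inr 1`, `z = Sum.inr 2`, `x' = Sum.inr 3` forming a path
`x - y - z - x'`, where additionally `y` is adjacent to every vertex of `X ∪ Z` and
`z` is adjacent to every vertex of `Y`. -/
def bisplitExt {V : Type*} (G : SimpleGraph V) (X Y Z : Set V) : SimpleGraph (V ⊕ Fin 4) :=
  SimpleGraph.fromRel (fun a b =>
    (∃ u v, a = Sum.inl u ∧ b = Sum.inl v ∧ G.Adj u v) ∨
    (a = Sum.inr 0 ∧ b = Sum.inr 1) ∨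
    (a = Sum.inr 1 ∧ b = Sum.inr 2) ∨
    (a = Sum.inr 2 ∧ b = Sum.inr 3) ∨
    (∃ u, a = Sum.inr 1 ∧ b = Sum.inl u ∧ u ∈ X ∪ Z) ∨
    (∃ u, a = Sum.inr 2 ∧ b = Sum.inl u ∧ u ∈ Y))

/-! If `D` dominates `G`, then `D ∪ {y, z}` is a secure dominating set of `G*`: `{y, z}` alone
dominates everything else, and `x`, `x'` are defended by `y`, `z`.

Conversely, let `S` be secure dominating in `G*`. Each vertex `w` of `G` has exactly one neighbour
`h ∈ {y, z}` (its hub), and the leaf `ℓ ∈ {x, x'}` hangs from `h` alone. If `w ∉ S` has no neighbour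
in `S ∩ V(G)`, then `h` is its only neighbour in `S`, so its defender is `h`. Swapping `h` for `w`
shows that every other such vertex with hub `h` is adjacent to `w`, and that `ℓ ∈ S` (swapping `h`
for `ℓ` would leave `w` undominated). Hence adding one such `w` per hub to `S ∩ V(G)` dominates `G`,
and each added vertex is paid for by `S` containing both `h` and `ℓ`, whereas `S` always meets
`{x, y}` and `{z, x'}`. -/

theorem Set.ncard_preimage_inl_add_ncard_preimage_inr {α β : Type*} {s : Set (α ⊕ β)}
    (hs : s.Finite) : (Sum.inl ⁻¹' s).ncard + (Sum.inr ⁻¹' s).ncard = s.ncard := by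
  have hinl : (Sum.inl '' (Sum.inl ⁻¹' s)).Finite := hs.subset (Set.image_preimage_subset _ _)
  have hinr : (Sum.inr '' (Sum.inr ⁻¹' s)).Finite := hs.subset (Set.image_preimage_subset _ _)
  conv_rhs => rw [← Set.image_preimage_inl_union_image_preimage_inr s]
  rw [Set.ncard_union_eq Set.disjoint_image_inl_image_inr hinl hinr,
    Set.ncard_image_of_injective _ Sum.inl_injective,
    Set.ncard_image_of_injective _ Sum.inr_injective]

theorem Set.ncard_inter_add_ncard_inter_le {α : Type*} {s t u : Set α} (hs : s.Finite)
    (htu : Disjoint t u) : (s ∩ t).ncard + (s ∩ u).ncard ≤ s.ncard := by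
  rw [← Set.ncard_union_eq (htu.mono Set.inter_subset_right Set.inter_subset_right)
    (hs.subset Set.inter_subset_left) (hs.subset Set.inter_subset_left)]
  exact Set.ncard_le_ncard (Set.union_subset Set.inter_subset_left Set.inter_subset_left) hs

section Domination

variable {W : Type*} {H : SimpleGraph W} {S : Set W}

theorem Dominates.mono {T : Set W} (hS : Dominates H S) (hST : S ⊆ T) : Dominates H T := by
  intro u hu
  obtain ⟨v, hv, huv⟩ := hS u (fun h => hu (hST h))
  exact ⟨v, hST hv, huv⟩

theorem Dominates.mem_of_forall_adj_eq (hS : Dominates H S) {d w : W} (hw : w ∉ S)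
    (hwd : ∀ v ∈ S, H.Adj w v → v = d) : d ∈ S := by
  obtain ⟨v, hv, hwv⟩ := hS w hw
  exact hwd v hv hwv ▸ hv

namespace SecureDominates

theorem adj_of_forall_adj_eq (hS : SecureDominates H S) {d w w' : W}
    (hw : w ∉ S) (hwd : ∀ v ∈ S, H.Adj w v → v = d)
    (hw' : w' ∉ S) (hw'd : ∀ v ∈ S, H.Adj w' v → v = d) (hne : w' ≠ w) : H.Adj w' w := by
  obtain ⟨v, hv, hwv, hswap⟩ := hS.2 w hw
  obtain rfl := hwd v hv hwv
  obtain ⟨e, he, hw'e⟩ := hswap w' (by simp [hw', hne])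
  rcases he with ⟨heS, hed⟩ | rfl
  · exact absurd (hw'd e heS hw'e) hed
  · exact hw'e

theorem mem_of_forall_adj_eq_of_pendant (hS : SecureDominates H S) {d ℓ w : W}
    (hℓ : ∀ v, H.Adj ℓ v ↔ v = d) (hw : w ∉ S) (hwd : ∀ v ∈ S, H.Adj w v → v = d)
    (hwℓ : w ≠ ℓ) : ℓ ∈ S := by
  have hdS : d ∈ S := hS.1.mem_of_forall_adj_eq hw hwd
  by_contra hℓS
  have hwℓ' : ¬ H.Adj w ℓ := fun h => hw ((hℓ w).1 h.symm ▸ hdS)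
  exact hwℓ' (hS.adj_of_forall_adj_eq hℓS (fun v _ h => (hℓ v).1 h) hw hwd hwℓ)

theorem exists_dominator_of_pendant (hS : SecureDominates H S) {d ℓ : W}
    (hℓ : ∀ v, H.Adj ℓ v ↔ v = d) {P : Set W} (hℓP : ℓ ∉ P) (hPS : ∀ w ∈ P, w ∉ S)
    (hPd : ∀ w ∈ P, ∀ v ∈ S, H.Adj w v → v = d) :
    ∃ E ⊆ P, E.ncard + 1 ≤ (S ∩ {d, ℓ}).ncard ∧ ∀ w ∈ P, w ∉ E → ∃ e ∈ E, H.Adj w e := by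
  rcases P.eq_empty_or_nonempty with rfl | ⟨w, hwP⟩
  · refine ⟨∅, subset_rfl, ?_, by simp⟩
    rw [Set.ncard_empty, zero_add, Nat.one_le_iff_ne_zero]
    have hdℓ : (S ∩ {d, ℓ}).Nonempty := by
      by_cases hℓS : ℓ ∈ S
      · exact ⟨ℓ, hℓS, by simp⟩
      · obtain ⟨v, hv, hℓv⟩ := hS.1 ℓ hℓS
        exact ⟨v, hv, by simp [(hℓ v).1 hℓv]⟩
    exact (hdℓ.ncard_pos ((Set.toFinite _).inter_of_right S)).ne'
  · refine ⟨{w}, by simpa using hwP, ?_, fun w' hw'P hw' => ⟨w, rfl, ?_⟩⟩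
    · have hdS : d ∈ S := hS.1.mem_of_forall_adj_eq (hPS w hwP) (hPd w hwP)
      have hℓS : ℓ ∈ S := hS.mem_of_forall_adj_eq_of_pendant hℓ (hPS w hwP) (hPd w hwP)
        (fun h => hℓP (h ▸ hwP))
      have hdℓ : d ≠ ℓ := ((hℓ d).2 rfl).ne.symm
      rw [Set.inter_eq_right.2 (Set.pair_subset hdS hℓS), Set.ncard_pair hdℓ,
        Set.ncard_singleton]
    · exact hS.adj_of_forall_adj_eq (hPS w hwP) (hPd w hwP) (hPS w' hw'P) (hPd w' hw'P)
        (by simpa using hw')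

end SecureDominates

end Domination

section bisplitExt

variable {V : Type*} {G : SimpleGraph V} {X Y Z : Set V}

@[simp]
theorem bisplitExt_adj_inl_inl {u v : V} :
    (bisplitExt G X Y Z).Adj (Sum.inl u) (Sum.inl v) ↔ G.Adj u v := by
  simp [bisplitExt, SimpleGraph.fromRel_adj, G.adj_comm v u]
  exact fun h => h.ne

@[simp]
theorem bisplitExt_adj_inl_inr {u : V} {i : Fin 4} :
    (bisplitExt G X Y Z).Adj (Sum.inl u) (Sum.inr i) ↔ i = 1 ∧ u ∈ X ∪ Z ∨ i = 2 ∧ u ∈ Y := by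
  simp [bisplitExt, SimpleGraph.fromRel_adj]

theorem bisplitExt_adj_inr_zero {v : V ⊕ Fin 4} :
    (bisplitExt G X Y Z).Adj (Sum.inr 0) v ↔ v = Sum.inr 1 := by
  rcases v with v | i
  · simp [bisplitExt, SimpleGraph.fromRel_adj]
  · fin_cases i <;> simp [bisplitExt, SimpleGraph.fromRel_adj]

theorem bisplitExt_adj_inr_three {v : V ⊕ Fin 4} :
    (bisplitExt G X Y Z).Adj (Sum.inr 3) v ↔ v = Sum.inr 2 := by
  rcases v with v | i
  · simp [bisplitExt, SimpleGraph.fromRel_adj]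
  · fin_cases i <;> simp [bisplitExt, SimpleGraph.fromRel_adj]

theorem dominates_bisplitExt_hubs (hpart : X ∪ Y ∪ Z = Set.univ) :
    Dominates (bisplitExt G X Y Z) {Sum.inr 1, Sum.inr 2} := by
  rintro (u | i) hu
  · have hu' : u ∈ X ∪ Y ∪ Z := hpart ▸ Set.mem_univ u
    rcases hu' with (huX | huY) | huZ
    · exact ⟨Sum.inr 1, by simp, by simp [huX]⟩
    · exact ⟨Sum.inr 2, by simp, by simp [huY]⟩
    · exact ⟨Sum.inr 1, by simp, by simp [huZ]⟩
  · fin_cases i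
    · exact ⟨Sum.inr 1, by simp, bisplitExt_adj_inr_zero.2 rfl⟩
    · simp at hu
    · simp at hu
    · exact ⟨Sum.inr 2, by simp, bisplitExt_adj_inr_three.2 rfl⟩

theorem Dominates.image_inl_union_bisplitExt {D : Set V} (hD : Dominates G D) {a b : Fin 4}
    (ha : a = 0 ∨ a = 1) (hb : b = 2 ∨ b = 3) :
    Dominates (bisplitExt G X Y Z) (Sum.inl '' D ∪ {Sum.inr a, Sum.inr b}) := by
  rintro (u | i) hu
  · obtain ⟨v, hv, huv⟩ := hD u (fun h => hu (.inl ⟨u, h, rfl⟩))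
    exact ⟨Sum.inl v, .inl ⟨v, hv, rfl⟩, bisplitExt_adj_inl_inl.2 huv⟩
  · rcases ha with rfl | rfl <;> rcases hb with rfl | rfl <;> fin_cases i <;>
      simp_all [bisplitExt, SimpleGraph.fromRel_adj]

theorem Dominates.secureDominates_bisplitExt (hpart : X ∪ Y ∪ Z = Set.univ) {D : Set V}
    (hD : Dominates G D) :
    SecureDominates (bisplitExt G X Y Z) (Sum.inl '' D ∪ {Sum.inr 1, Sum.inr 2}) := by
  refine ⟨hD.image_inl_union_bisplitExt (.inr rfl) (.inl rfl), ?_⟩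
  rintro (u | i) hu
  · obtain ⟨v, hv, huv⟩ := hD u (fun h => hu (.inl ⟨u, h, rfl⟩))
    refine ⟨Sum.inl v, .inl ⟨v, hv, rfl⟩, bisplitExt_adj_inl_inl.2 huv, ?_⟩
    exact (dominates_bisplitExt_hubs hpart).mono (by simp [Set.insert_subset_iff])
  · fin_cases i
    · refine ⟨Sum.inr 1, by simp, bisplitExt_adj_inr_zero.2 rfl, ?_⟩
      refine (hD.image_inl_union_bisplitExt (.inl rfl) (.inl rfl)).mono ?_
      simp
    · simp at hu
    · simp at hu
    · refine ⟨Sum.inr 2, by simp, bisplitExt_adj_inr_three.2 rfl, ?_⟩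
      refine (hD.image_inl_union_bisplitExt (.inr rfl) (.inr rfl)).mono ?_
      simp [Set.subset_def]

theorem ncard_image_inl_union_pair_le {D : Set V} {a b : Fin 4} :
    (Sum.inl '' D ∪ {Sum.inr a, Sum.inr b} : Set (V ⊕ Fin 4)).ncard ≤ D.ncard + 2 :=
  calc _ ≤ (Sum.inl '' D).ncard + ({Sum.inr a, Sum.inr b} : Set (V ⊕ Fin 4)).ncard :=
        Set.ncard_union_le _ _
    _ ≤ D.ncard + 2 := by
        rw [Set.ncard_image_of_injective _ Sum.inl_injective]
        exact Nat.add_le_add_left (Set.ncard_insert_le _ _) _ |>.trans (by simp)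

theorem bisplitExt_adj_inl_inr_eq (hXY : Disjoint X Y) (hYZ : Disjoint Y Z) (w : V) :
    (∀ j, (bisplitExt G X Y Z).Adj (Sum.inl w) (Sum.inr j) → j = 1) ∨
      ∀ j, (bisplitExt G X Y Z).Adj (Sum.inl w) (Sum.inr j) → j = 2 := by
  by_cases hwY : w ∈ Y
  · refine .inr fun j hj => ?_
    have hwXZ : w ∉ X ∪ Z :=
      fun h => h.elim (hXY.notMem_of_mem_left · hwY) (hYZ.notMem_of_mem_right · hwY)
    simpa [hwXZ, hwY] using hj
  · exact .inl fun j hj => (by simpa [hwY] using hj : j = 1 ∧ _).1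

theorem SecureDominates.exists_dominator_bisplitExt {S : Set (V ⊕ Fin 4)}
    (hS : SecureDominates (bisplitExt G X Y Z) S) {i ℓ : Fin 4}
    (hℓ : ∀ v, (bisplitExt G X Y Z).Adj (Sum.inr ℓ) v ↔ v = Sum.inr i) :
    ∃ E : Set V, E.ncard + 1 ≤ (Sum.inr ⁻¹' S ∩ {i, ℓ}).ncard ∧
      ∀ w, Sum.inl w ∉ S → (∀ j, (bisplitExt G X Y Z).Adj (Sum.inl w) (Sum.inr j) → j = i) →
        w ∉ E → ∃ v, (Sum.inl v ∈ S ∨ v ∈ E) ∧ G.Adj w v := by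
  set P : Set (V ⊕ Fin 4) := {u | u ∈ Set.range Sum.inl ∧ u ∉ S ∧
    ∀ v ∈ S, (bisplitExt G X Y Z).Adj u v → v = Sum.inr i}
  obtain ⟨E, hEP, hEcard, hE⟩ := hS.exists_dominator_of_pendant hℓ (P := P) (by simp [P])
    (fun _ hu => hu.2.1) (fun _ hu => hu.2.2)
  refine ⟨Sum.inl ⁻¹' E, ?_, fun w hwS hwi hwE => ?_⟩
  · have hSiℓ : S ∩ {Sum.inr i, Sum.inr ℓ} = Sum.inr '' (Sum.inr ⁻¹' S ∩ {i, ℓ}) := by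
      ext (v | j) <;> simp
    calc (Sum.inl ⁻¹' E).ncard + 1 = E.ncard + 1 := by
          rw [Set.ncard_preimage_of_injective_subset_range Sum.inl_injective
            fun _ hu => (hEP hu).1]
      _ ≤ (S ∩ {Sum.inr i, Sum.inr ℓ}).ncard := hEcard
      _ = (Sum.inr ⁻¹' S ∩ {i, ℓ}).ncard := by
          rw [hSiℓ, Set.ncard_image_of_injective _ Sum.inr_injective]
  · by_contra hnone
    push Not at hnone
    have hwP : Sum.inl w ∈ P := by
      refine ⟨⟨w, rfl⟩, hwS, fun v hv hwv => ?_⟩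
      rcases v with v | j
      · exact absurd (bisplitExt_adj_inl_inl.1 hwv) (hnone v (.inl hv))
      · rw [hwi j hwv]
    obtain ⟨e, he, hwe⟩ := hE _ hwP hwE
    obtain ⟨e, rfl⟩ := (hEP he).1
    exact hnone e (.inr he) (bisplitExt_adj_inl_inl.1 hwe)

theorem SecureDominates.exists_dominates_ncard_add_two_le [Finite V] (hXY : Disjoint X Y)
    (hYZ : Disjoint Y Z) {S : Set (V ⊕ Fin 4)} (hS : SecureDominates (bisplitExt G X Y Z) S) :
    ∃ D : Set V, Dominates G D ∧ D.ncard + 2 ≤ S.ncard := by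
  obtain ⟨E₁, hE₁card, hE₁⟩ :=
    hS.exists_dominator_bisplitExt (i := 1) (ℓ := 0) fun _ => bisplitExt_adj_inr_zero
  obtain ⟨E₂, hE₂card, hE₂⟩ :=
    hS.exists_dominator_bisplitExt (i := 2) (ℓ := 3) fun _ => bisplitExt_adj_inr_three
  refine ⟨Sum.inl ⁻¹' S ∪ E₁ ∪ E₂, fun w hw => ?_, ?_⟩
  · simp only [Set.mem_union, Set.mem_preimage, not_or] at hw
    obtain ⟨⟨hwS, hwE₁⟩, hwE₂⟩ := hw
    rcases bisplitExt_adj_inl_inr_eq hXY hYZ w with hw | hw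
    · obtain ⟨v, hv, hwv⟩ := hE₁ w hwS hw hwE₁
      exact ⟨v, by simp only [Set.mem_union, Set.mem_preimage]; tauto, hwv⟩
    · obtain ⟨v, hv, hwv⟩ := hE₂ w hwS hw hwE₂
      exact ⟨v, by simp only [Set.mem_union, Set.mem_preimage]; tauto, hwv⟩
  · have hS₁₂ := Set.ncard_inter_add_ncard_inter_le (Set.toFinite (Sum.inr ⁻¹' S))
      (t := {1, 0}) (u := {2, 3}) (by simp [Set.disjoint_left])
    have hSsum := Set.ncard_preimage_inl_add_ncard_preimage_inr (Set.toFinite S)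
    have hD : (Sum.inl ⁻¹' S ∪ E₁ ∪ E₂).ncard ≤ (Sum.inl ⁻¹' S).ncard + E₁.ncard + E₂.ncard :=
      (Set.ncard_union_le _ _).trans (Nat.add_le_add_right (Set.ncard_union_le _ _) _)
    omega

end bisplitExt

theorem bisplitExt_domination_iff_secureDomination_general {V : Type*} [Fintype V]
    (G : SimpleGraph V) (X Y Z : Set V)
    (hpart : X ∪ Y ∪ Z = Set.univ)
    (hXY : Disjoint X Y) (hYZ : Disjoint Y Z)
    (k : ℕ) :
    (∃ D : Set V, Dominates G D ∧ D.ncard ≤ k) ↔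
      (∃ S : Set (V ⊕ Fin 4), SecureDominates (bisplitExt G X Y Z) S ∧ S.ncard ≤ k + 2) := by
  constructor
  · rintro ⟨D, hD, hDk⟩
    exact ⟨_, hD.secureDominates_bisplitExt hpart, ncard_image_inl_union_pair_le.trans (by omega)⟩
  · rintro ⟨S, hS, hSk⟩
    obtain ⟨D, hD, hDS⟩ := hS.exists_dominates_ncard_add_two_le hXY hYZ
    exact ⟨D, hD, by omega⟩

theorem bisplitExt_domination_iff_secureDomination {V : Type*} [Fintype V]
    (G : SimpleGraph V) (X Y Z : Set V)
    (hpart : X ∪ Y ∪ Z = Set.univ)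
    (hXY : Disjoint X Y) (hXZ : Disjoint X Z) (hYZ : Disjoint Y Z)
    (hX : ∀ a ∈ X, ∀ b ∈ X, ¬ G.Adj a b)
    (hY : ∀ a ∈ Y, ∀ b ∈ Y, ¬ G.Adj a b)
    (hZ : ∀ a ∈ Z, ∀ b ∈ Z, ¬ G.Adj a b)
    (hbic : ∀ a ∈ Y, ∀ b ∈ Z, G.Adj a b)
    (k : ℕ) (hk : 0 < k) :
    (∃ D : Set V, Dominates G D ∧ D.ncard ≤ k) ↔
      (∃ S : Set (V ⊕ Fin 4), SecureDominates (bisplitExt G X Y Z) S ∧ S.ncard ≤ k + 2) :=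
  bisplitExt_domination_iff_secureDomination_general G X Y Z hpart hXY hYZ k
end
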